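/- Let K be a field of characteristic 0 and let t, d ∈ K. The Weierstrass curve C_{25,1}(t,d) has invariants c₄ = 2⁴·3⁴·d²·S₂(t)·S₄(t), c₆ = 2⁶·3⁶·d³·S₂(t)²·S₅(t)·S₆(t), and discriminant Δ = 2¹²·3¹²·d⁶·S₁(t)·S₂(t)³·S₃(t)²⁵; moreover, if Δ ≠ 0 then its j-invariant equals S₄(t)³ / (S₁(t)·S₃(t)²⁵). -/

import Mathlib

noncomputable section

/-- The polynomial `S1`. -/
def S1 {K : Type*} [Field K] (t : K) : K := t ^ 4 + t ^ 3 + 6 * t ^ 2 + 6 * t + 11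

/-- The polynomial `S2`. -/
def S2 {K : Type*} [Field K] (t : K) : K := t ^ 2 + 4

/-- The polynomial `S3`. -/
def S3 {K : Type*} [Field K] (t : K) : K := t - 1

/-- The polynomial `S4`. -/
def S4 {K : Type*} [Field K] (t : K) : K := t ^ 10 + 240 * t ^ 9 + 2170 * t ^ 8 + 8880 * t ^ 7 + 34835 * t ^ 6 + 83748 * t ^ 5 + 206210 * t ^ 4 + 313380 * t ^ 3 + 503545 * t ^ 2 + 424740 * t + 375376

/-- The polynomial `S5`. -/
def S5 {K : Type*} [Field K] (t : K) : K := t ^ 4 + 6 * t ^ 3 + 21 * t ^ 2 + 36 * t + 61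

/-- The polynomial `S6`. -/
def S6 {K : Type*} [Field K] (t : K) : K := t ^ 10 - 510 * t ^ 9 - 13580 * t ^ 8 - 36870 * t ^ 7 - 190915 * t ^ 6 - 393252 * t ^ 5 - 1068040 * t ^ 4 - 1508370 * t ^ 3 - 2581955 * t ^ 2 - 2087010 * t - 1885124

/-- The curve `C_{25,1}(t,d)`. -/
def C251 {K : Type*} [Field K] (t d : K) : WeierstrassCurve K :=
  { a₁ := 0, a₂ := 0, a₃ := 0,
    a₄ := -27 * d ^ 2 * S2 t * S4 t,
    a₆ := -54 * d ^ 3 * S2 t ^ 2 * S5 t * S6 t }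

/-! The curve is in short normal form, so `c₄ = -48 a₄`, `c₆ = -864 a₆` and
`Δ = -16 (4 a₄³ + 27 a₆²)`. With the given `a₄, a₆` the discriminant reduces to
`2⁶ 3⁹ d⁶ S₂³ (S₄³ - S₂ (S₅ S₆)²)`, and the whole content is the polynomial identity
`S₄³ - S₂ (S₅ S₆)² = 1728 S₁ S₃²⁵`. The `j`-invariant then follows by cancelling the
common factor `2¹² 3¹² d⁶ S₂³` of `c₄³` and `Δ`. -/

open WeierstrassCurve

section

variable {K : Type*} [Field K]

instance C251.isShortNF (t d : K) : (C251 t d).IsShortNF := ⟨rfl, rfl, rfl⟩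

theorem S4_pow_three_sub_S2_mul_S5_mul_S6_sq (t : K) :
    S4 t ^ 3 - S2 t * (S5 t * S6 t) ^ 2 = 1728 * S1 t * S3 t ^ 25 := by
  simp only [S1, S2, S3, S4, S5, S6]
  ring

theorem C251_c₄ (t d : K) : (C251 t d).c₄ = 2 ^ 4 * 3 ^ 4 * d ^ 2 * S2 t * S4 t := by
  rw [c₄_of_isShortNF]
  simp only [C251]
  ring

theorem C251_c₆ (t d : K) :
    (C251 t d).c₆ = 2 ^ 6 * 3 ^ 6 * d ^ 3 * S2 t ^ 2 * S5 t * S6 t := by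
  rw [c₆_of_isShortNF]
  simp only [C251]
  ring

theorem C251_Δ (t d : K) :
    (C251 t d).Δ = 2 ^ 12 * 3 ^ 12 * d ^ 6 * S1 t * S2 t ^ 3 * S3 t ^ 25 := by
  rw [Δ_of_isShortNF]
  simp only [C251]
  linear_combination (2 ^ 6 * 3 ^ 9 * d ^ 6 * S2 t ^ 3) * S4_pow_three_sub_S2_mul_S5_mul_S6_sq t

end

theorem stmt2_general {K : Type*} [Field K] (t d : K) :
    (C251 t d).c₄ = 2 ^ 4 * 3 ^ 4 * d ^ 2 * S2 t * S4 t ∧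
    (C251 t d).c₆ = 2 ^ 6 * 3 ^ 6 * d ^ 3 * S2 t ^ 2 * S5 t * S6 t ∧
    (C251 t d).Δ = 2 ^ 12 * 3 ^ 12 * d ^ 6 * S1 t * S2 t ^ 3 * S3 t ^ 25 ∧
    ((C251 t d).Δ ≠ 0 → (C251 t d).c₄ ^ 3 / (C251 t d).Δ =
      S4 t ^ 3 / (S1 t * S3 t ^ 25)) := by
  refine ⟨C251_c₄ t d, C251_c₆ t d, C251_Δ t d, fun hΔ => ?_⟩
  have hΔ_factor : (C251 t d).Δ =
      (2 ^ 12 * 3 ^ 12 * d ^ 6 * S2 t ^ 3) * (S1 t * S3 t ^ 25) := by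
    rw [C251_Δ]
    ring
  rw [hΔ_factor] at hΔ ⊢
  rw [C251_c₄, ← mul_div_mul_left (S4 t ^ 3) _ (left_ne_zero_of_mul hΔ)]
  congr 1
  ring

theorem stmt2 {K : Type*} [Field K] [CharZero K] (t d : K) :
    (C251 t d).c₄ = 2 ^ 4 * 3 ^ 4 * d ^ 2 * S2 t * S4 t ∧
    (C251 t d).c₆ = 2 ^ 6 * 3 ^ 6 * d ^ 3 * S2 t ^ 2 * S5 t * S6 t ∧
    (C251 t d).Δ = 2 ^ 12 * 3 ^ 12 * d ^ 6 * S1 t * S2 t ^ 3 * S3 t ^ 25 ∧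
    ((C251 t d).Δ ≠ 0 → (C251 t d).c₄ ^ 3 / (C251 t d).Δ =
      S4 t ^ 3 / (S1 t * S3 t ^ 25)) :=
  stmt2_general t d
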